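/- Let p be an odd prime, n ≥ 1, q = p^n, and let F(x) = x^{q − 2} be the inverse power function over GF(q). Let c ∈ GF(q) with c ∉ {0, 1, 4, 4^{-1}}. If χ(c² − 4c)·χ(1 − 4c) = −1 and χ(c) = −1, then the c-differential spectrum of F is given by ω_0 = (q − 1)/2, ω_1 = 2, ω_2 = (q − 5)/2, ω_3 = 1, and ω_i = 0 for i ≥ 4. -/

import Mathlib

open Finset

/-- `cdelta F d c b` is the number of `x` in the finite field `F` with
`(x+1)^d - c * x^d = b`, i.e. the entry `δ_c(b)` of the `c`-DDT of `x ↦ x^d`. -/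
noncomputable def cdelta (F : Type*) [Field F] (d : ℕ) (c b : F) : ℕ :=
  Nat.card {x : F // (x + 1) ^ d - c * x ^ d = b}

/-- `comega F d c i` is the number of `b` in `F` with `δ_c(b) = i`,
i.e. the value `ω_i` of the `c`-differential spectrum of `x ↦ x^d`. -/
noncomputable def comega (F : Type*) [Field F] (d : ℕ) (c : F) (i : ℕ) : ℕ :=
  Nat.card {b : F // cdelta F d c b = i}

open scoped Classical in
/-- The quadratic character of `F`, valued in `ℤ`. -/
noncomputable def chi (F : Type*) [Field F] (x : F) : ℤ :=
  if x = 0 then 0 else if IsSquare x then 1 else -1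

/-!
For `x ∉ {0, -1}` the equation `(x + 1)⁻¹ - c x⁻¹ = b` is the quadratic
`b x² + (b + c - 1) x + c = 0`, whose discriminant `(b - c - 1)² - 4c` never vanishes when
`c` is a nonsquare; the points `x = 0` and `x = -1` only contribute to `b = 1` and `b = c`.
Hence `δ_c(0) = 1`, `δ_c(b) ∈ {0, 2}` for `b ∉ {0, 1, c}`, and `δ_c(1)`, `δ_c(c)` are `1` or
`3` according as the discriminants `c² - 4c`, `1 - 4c` are squares, which happens for exactly
one of them. This gives `ω₁ = 2` and `ω₃ = 1`, and `∑ ωᵢ = ∑ i ωᵢ = q` determine `ω₀`, `ω₂`.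
-/
section Counting

variable {F : Type*} [Field F] [Fintype F]

lemma cdelta_eq_card [DecidableEq F] (d : ℕ) (c b : F) :
    cdelta F d c b = #{x | (x + 1) ^ d - c * x ^ d = b} := by
  rw [cdelta, Nat.card_eq_fintype_card, Fintype.card_subtype]

lemma comega_eq_card (d : ℕ) (c : F) (i : ℕ) :
    comega F d c i = #{b | cdelta F d c b = i} := by
  rw [comega, Nat.card_eq_fintype_card, Fintype.card_subtype]

lemma sum_comega_eq_card {d N : ℕ} {c : F} (h : ∀ b, cdelta F d c b < N) :
    ∑ i ∈ range N, comega F d c i = Fintype.card F := by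
  simp only [comega_eq_card]
  rw [← card_eq_sum_card_fiberwise fun b _ => mem_range.mpr (h b), card_univ]

lemma sum_mul_comega_eq_card [DecidableEq F] {d N : ℕ} {c : F} (h : ∀ b, cdelta F d c b < N) :
    ∑ i ∈ range N, i * comega F d c i = Fintype.card F := by
  calc ∑ i ∈ range N, i * comega F d c i = ∑ b, cdelta F d c b := by
        rw [← sum_fiberwise_of_maps_to fun b _ => mem_range.mpr (h b)]
        refine sum_congr rfl fun i _ => ?_
        rw [comega_eq_card, sum_congr rfl fun b hb => (mem_filter.mp hb).2, sum_const,
          smul_eq_mul, mul_comm]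
    _ = Fintype.card F := by
        simp only [cdelta_eq_card]
        rw [← card_eq_sum_card_fiberwise fun x _ => mem_univ _, card_univ]

lemma comega_one_eq_two_and_comega_three_eq_one [DecidableEq F] {d : ℕ} {c u v : F}
    (hv0 : v ≠ 0) (h0 : cdelta F d c 0 = 1) (hu : cdelta F d c u = 3) (hv : cdelta F d c v = 1)
    (hrest : ∀ b, b ≠ 0 → b ≠ u → b ≠ v → cdelta F d c b = 0 ∨ cdelta F d c b = 2) :
    comega F d c 1 = 2 ∧ comega F d c 3 = 1 ∧ ∀ b, cdelta F d c b < 4 := by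
  have hu0 : u ≠ 0 := by rintro rfl; omega
  have huv : u ≠ v := by rintro rfl; omega
  have key : ∀ b, (cdelta F d c b = 1 ↔ b = 0 ∨ b = v) ∧ (cdelta F d c b = 3 ↔ b = u) ∧
      cdelta F d c b < 4 := by
    intro b
    rcases eq_or_ne b 0 with rfl | hb0
    · simp [h0, hu0.symm]
    rcases eq_or_ne b u with rfl | hbu
    · simp [hu, hb0, huv]
    rcases eq_or_ne b v with rfl | hbv
    · simp [hv, hb0, huv.symm]
    rcases hrest b hb0 hbu hbv with h | h <;> simp [h, hb0, hbu, hbv]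
  refine ⟨?_, ?_, fun b => (key b).2.2⟩
  · rw [comega_eq_card, ← card_pair hv0.symm]
    congr 1
    ext b
    simp [(key b).1]
  · rw [comega_eq_card, ← card_singleton u]
    congr 1
    ext b
    simp [(key b).2.1]

end Counting

lemma FiniteField.three_le_card_of_odd {F : Type*} [Field F] [Fintype F]
    (hq : Odd (Fintype.card F)) : 3 ≤ Fintype.card F := by
  have := Fintype.one_lt_card (α := F)
  obtain ⟨k, hk⟩ := hq
  omega

lemma FiniteField.two_ne_zero_of_odd_card {F : Type*} [Field F] [Fintype F]
    (hq : Odd (Fintype.card F)) : (2 : F) ≠ 0 :=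
  Ring.two_ne_zero fun h => by
    have := FiniteField.even_card_iff_char_two.mp h
    rw [Nat.odd_iff] at hq
    omega

lemma FiniteField.pow_card_sub_two_eq_inv {F : Type*} [Field F] [Fintype F]
    (hq : 3 ≤ Fintype.card F) (x : F) : x ^ (Fintype.card F - 2) = x⁻¹ := by
  rcases eq_or_ne x 0 with rfl | hx
  · rw [zero_pow (by omega), inv_zero]
  · refine eq_inv_of_mul_eq_one_left ?_
    rw [← pow_succ, show Fintype.card F - 2 + 1 = Fintype.card F - 1 by omega,
      FiniteField.pow_card_sub_one_eq_one x hx]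

lemma card_quadratic_roots {K : Type*} [Field K] [Fintype K] [DecidableEq K] [NeZero (2 : K)]
    {a b c : K} (ha : a ≠ 0) (hd : discrim a b c ≠ 0) :
    #{x | a * (x * x) + b * x + c = 0} = if IsSquare (discrim a b c) then 2 else 0 := by
  split_ifs with hsq
  · obtain ⟨s, hs⟩ := hsq
    have hs0 : s ≠ 0 := by rintro rfl; exact hd (by simpa using hs)
    have hroots : (-b + s) / (2 * a) ≠ (-b - s) / (2 * a) := by
      rw [Ne, div_left_inj' (mul_ne_zero two_ne_zero ha)]
      intro h
      have h2s : (2 : K) * s = 0 := by linear_combination h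
      exact hs0 ((mul_eq_zero.mp h2s).resolve_left two_ne_zero)
    rw [← card_pair hroots]
    congr 1
    ext x
    simp [quadratic_eq_zero_iff ha hs]
  · rw [card_eq_zero, filter_eq_empty_iff]
    exact fun x _ => quadratic_ne_zero_of_discrim_ne_sq (fun s hs => hsq ⟨s, hs.trans (sq s)⟩) x

lemma inv_add_one_sub_mul_inv_eq_iff {K : Type*} [Field K] {c : K} (hc : c ≠ 0) (b x : K) :
    (x + 1)⁻¹ - c * x⁻¹ = b ↔
      (x = 0 ∧ b = 1) ∨ (x = -1 ∧ b = c) ∨ b * (x * x) + (b + c - 1) * x + c = 0 := by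
  rcases eq_or_ne x 0 with rfl | hx
  · simp [hc, eq_comm]
  rcases eq_or_ne x (-1) with rfl | hx1
  · have hQ : b * (-1 * -1) + (b + c - 1) * -1 + c = 1 := by ring
    rw [hQ]
    simp [eq_comm]
  have hx1' : x + 1 ≠ 0 := fun h => hx1 (eq_neg_of_add_eq_zero_left h)
  have key :
      (x + 1)⁻¹ - c * x⁻¹ - b = -(b * (x * x) + (b + c - 1) * x + c) / (x * (x + 1)) := by
    field_simp
    ring
  rw [← sub_eq_zero, key, div_eq_zero_iff, neg_eq_zero]
  simp [hx, hx1, hx1']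

lemma discrim_ne_zero_of_not_isSquare {K : Type*} [Field K] {c : K} (h2 : (2 : K) ≠ 0)
    (hc : ¬IsSquare c) (b : K) :
    discrim b (b + c - 1) c ≠ 0 := by
  intro h
  refine hc ⟨(b - c - 1) / 2, ?_⟩
  rw [discrim] at h
  field_simp
  linear_combination -h

section Inverse

variable {F : Type*} [Field F] [Fintype F] [DecidableEq F] {c : F}

lemma cdelta_card_sub_two (hq : Odd (Fintype.card F)) (hc : c ≠ 0) (b : F) :
    cdelta F (Fintype.card F - 2) c b =
      (if b = 1 then 1 else 0) + (if b = c then 1 else 0) +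
        #{x | b * (x * x) + (b + c - 1) * x + c = 0} := by
  simp only [cdelta_eq_card, FiniteField.pow_card_sub_two_eq_inv
    (FiniteField.three_le_card_of_odd hq), inv_add_one_sub_mul_inv_eq_iff hc, filter_or]
  rw [card_union_of_disjoint, card_union_of_disjoint, ← add_assoc]
  · congr 2 <;> split_ifs with h <;> simp [h, filter_eq']
  · refine disjoint_filter.mpr fun x _ ⟨hx, hb⟩ hQ => one_ne_zero (α := F) ?_
    rw [hx, hb] at hQ
    linear_combination hQ
  · refine disjoint_left.mpr fun x hA hBC => ?_
    obtain ⟨rfl, rfl⟩ := (mem_filter.mp hA).2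
    rw [← filter_or, mem_filter] at hBC
    rcases hBC.2 with ⟨h, -⟩ | hQ
    · exact one_ne_zero (neg_eq_zero.mp h.symm)
    · exact hc (by simpa using hQ)

lemma cdelta_card_sub_two_zero (hq : Odd (Fintype.card F)) (hc0 : c ≠ 0) (hc1 : c ≠ 1) :
    cdelta F (Fintype.card F - 2) c 0 = 1 := by
  rw [cdelta_card_sub_two hq hc0, if_neg zero_ne_one, if_neg (Ne.symm hc0), zero_add, zero_add,
    card_eq_one]
  have h1c : 1 - c ≠ 0 := sub_ne_zero.mpr (Ne.symm hc1)
  refine ⟨c / (1 - c), ext fun x => ?_⟩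
  simp only [mem_filter, mem_univ, true_and, mem_singleton, zero_mul, zero_add]
  rw [eq_div_iff h1c]
  constructor <;> intro h <;> linear_combination -h

lemma cdelta_card_sub_two_of_ne_zero (hq : Odd (Fintype.card F)) (hc : ¬IsSquare c) {b : F}
    (hb : b ≠ 0) :
    cdelta F (Fintype.card F - 2) c b =
      (if b = 1 then 1 else 0) + (if b = c then 1 else 0) +
        if IsSquare (discrim b (b + c - 1) c) then 2 else 0 := by
  have h2 := FiniteField.two_ne_zero_of_odd_card hq
  have : NeZero (2 : F) := ⟨h2⟩
  rw [cdelta_card_sub_two hq (by rintro rfl; exact hc IsSquare.zero),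
    card_quadratic_roots hb (discrim_ne_zero_of_not_isSquare h2 hc b)]

lemma comega_card_sub_two_one_eq_two_and_three_eq_one (hq : Odd (Fintype.card F))
    (hc : ¬IsSquare c) (hsq : Xor (IsSquare (c ^ 2 - 4 * c)) (IsSquare (1 - 4 * c))) :
    comega F (Fintype.card F - 2) c 1 = 2 ∧ comega F (Fintype.card F - 2) c 3 = 1 ∧
      ∀ b, cdelta F (Fintype.card F - 2) c b < 4 := by
  have hc0 : c ≠ 0 := by rintro rfl; exact hc IsSquare.zero
  have hc1 : c ≠ 1 := by rintro rfl; exact hc IsSquare.one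
  have hδ0 := cdelta_card_sub_two_zero hq hc0 hc1
  have hδ := fun b (hb : b ≠ 0) => cdelta_card_sub_two_of_ne_zero hq hc hb
  have hδ1 :
      cdelta F (Fintype.card F - 2) c 1 = 1 + if IsSquare (c ^ 2 - 4 * c) then 2 else 0 := by
    rw [hδ 1 one_ne_zero, if_pos rfl, if_neg hc1.symm, add_zero,
      show discrim 1 (1 + c - 1) c = c ^ 2 - 4 * c by rw [discrim]; ring]
  have hδc : cdelta F (Fintype.card F - 2) c c = 1 + if IsSquare (1 - 4 * c) then 2 else 0 := by
    rw [hδ c hc0, if_neg hc1, if_pos rfl, zero_add,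
      show discrim c (c + c - 1) c = 1 - 4 * c by rw [discrim]; ring]
  have hrest : ∀ b, b ≠ 0 → b ≠ 1 → b ≠ c →
      cdelta F (Fintype.card F - 2) c b = 0 ∨ cdelta F (Fintype.card F - 2) c b = 2 := by
    intro b hb0 hb1 hbc
    rw [hδ b hb0, if_neg hb1, if_neg hbc]
    split_ifs <;> simp
  rcases hsq with ⟨hsq₁, hsq_c⟩ | ⟨hsq_c, hsq₁⟩
  · exact comega_one_eq_two_and_comega_three_eq_one hc0 hδ0 (by simp [hδ1, hsq₁])
      (by simp [hδc, hsq_c]) hrest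
  · exact comega_one_eq_two_and_comega_three_eq_one one_ne_zero hδ0 (by simp [hδc, hsq_c])
      (by simp [hδ1, hsq₁]) fun b hb0 hbc hb1 => hrest b hb0 hb1 hbc

end Inverse

section QuadraticCharacter

variable {F : Type*} [Field F]

lemma not_isSquare_of_chi_eq_neg_one {x : F} (h : chi F x = -1) : ¬IsSquare x := by
  intro hx
  unfold chi at h
  split_ifs at h

lemma xor_isSquare_of_chi_mul_chi_eq_neg_one {a b : F} (h : chi F a * chi F b = -1) :
    Xor (IsSquare a) (IsSquare b) := by
  unfold chi at h
  split_ifs at h <;> simp_all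

end QuadraticCharacter

theorem stmt_7_general (p n : ℕ) (hpodd : Odd p)
    (F : Type*) [Field F] [Fintype F] (hF : Fintype.card F = p ^ n)
    (c : F) (h1 : chi F (c ^ 2 - 4 * c) * chi F (1 - 4 * c) = -1) (h3 : chi F c = -1) :
    comega F (p ^ n - 2) c 0 = (p ^ n - 1) / 2 ∧
    comega F (p ^ n - 2) c 1 = 2 ∧
    comega F (p ^ n - 2) c 2 = (p ^ n - 5) / 2 ∧
    comega F (p ^ n - 2) c 3 = 1 ∧
    ∀ i, 4 ≤ i → comega F (p ^ n - 2) c i = 0 := by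
  classical
  have hq : Odd (Fintype.card F) := hF ▸ hpodd.pow
  obtain ⟨hω1, hω3, hlt⟩ := comega_card_sub_two_one_eq_two_and_three_eq_one hq
    (not_isSquare_of_chi_eq_neg_one h3) (xor_isSquare_of_chi_mul_chi_eq_neg_one h1)
  have hcard := sum_comega_eq_card hlt
  have hweight := sum_mul_comega_eq_card hlt
  simp only [sum_range_succ, sum_range_zero, hω1, hω3] at hcard hweight
  rw [← hF]
  refine ⟨by omega, hω1, by omega, hω3, fun i hi => ?_⟩
  rw [comega_eq_card, card_eq_zero, filter_eq_empty_iff]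
  exact fun b _ => (hlt b).trans_le hi |>.ne

theorem stmt_7 (p n : ℕ) (hp : p.Prime) (hpodd : Odd p) (hn : 1 ≤ n)
    (F : Type*) [Field F] [Fintype F] (hF : Fintype.card F = p ^ n)
    (c : F) (hc0 : c ≠ 0) (hc1 : c ≠ 1) (hc4 : c ≠ 4) (hc4i : c ≠ (4 : F)⁻¹)
    (h1 : chi F (c ^ 2 - 4 * c) * chi F (1 - 4 * c) = -1) (h3 : chi F c = -1) :
    comega F (p ^ n - 2) c 0 = (p ^ n - 1) / 2 ∧
    comega F (p ^ n - 2) c 1 = 2 ∧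
    comega F (p ^ n - 2) c 2 = (p ^ n - 5) / 2 ∧
    comega F (p ^ n - 2) c 3 = 1 ∧
    ∀ i, 4 ≤ i → comega F (p ^ n - 2) c i = 0 :=
  stmt_7_general p n hpodd F hF c h1 h3
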